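/- Let H_j(x,y) = Σ_{k=0}^{3} a_{jk} χ_{Υ_k(C_4×[0,1])}(x,y) with the property that a_{j0} + a_{j2} = a_{j1} + a_{j3} for each j. Then for any word ω = j_K ... j_1 in {0,1,2,3}, ∫_{[0,1]} ∏_{k=1}^{K} 2 H_{j_k}(R^{k-1}(x,y)) dλ(y) = ∏_{k=1}^{K} 2 ∫_{[0,1]} H_{j_k}(4^{k-1}x mod 1, y) dλ(y) for μ_4-a.e. x, and each factor equals a_{j_k,0} + a_{j_k,2}. -/

import Mathlib

open MeasureTheory Set
open scoped ENNReal

/-- The Cantor-4 set. -/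
def cantor4 : Set ℝ :=
  {x | ∃ a : ℕ → ℕ, (∀ k, a k = 0 ∨ a k = 2) ∧ x = ∑' k : ℕ, (a k : ℝ) / 4 ^ (k + 1)}

/-- The four maps of the IFS on ℝ². -/
noncomputable def Ups : Fin 4 → ℝ × ℝ → ℝ × ℝ :=
  ![fun z => (z.1 / 4, z.2 / 2), fun z => ((z.1 + 2) / 4, z.2 / 2),
    fun z => (z.1 / 4, (z.2 + 1) / 2), fun z => ((z.1 + 2) / 4, (z.2 + 1) / 2)]

/-- `R(x,y) = (4x mod 1, 2y mod 1)`. -/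
noncomputable def Rmap : ℝ × ℝ → ℝ × ℝ :=
  fun z => (Int.fract (4 * z.1), Int.fract (2 * z.2))

/-- The step functions `H_j = Σ_k a_{jk} χ_{Υ_k(C₄×[0,1])}`. -/
noncomputable def Hstep (a : Fin 4 → Fin 4 → ℂ) (j : Fin 4) (z : ℝ × ℝ) : ℂ :=
  ∑ k : Fin 4, a j k * indicator (Ups k '' (cantor4 ×ˢ Icc (0 : ℝ) 1)) (fun _ => (1 : ℂ)) z

/-!
The measure `μ₄` lives on `C₄`: both maps `x ↦ x / 4` and `x ↦ (x + 2) / 4` send the closed set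
`C₄` into itself and divide distances by `4`, so the self-similarity of `μ₄` gives
`μ₄ {d > t} ≤ μ₄ {d > 4t}` for `d = dist(·, C₄)`, which forces `μ₄ {d > 0} = 0`.

For `x ∈ C₄` all the points `4ⁱx mod 1` lie in `C₄`, and over such a point `H_j` is, as a function
of `y`, a step function with one value on `[0, 1/2]` and another on `[1/2, 1]`. Which pair of
coefficients, `(a_{j0}, a_{j2})` or `(a_{j1}, a_{j3})`, occurs depends on the half of `C₄`
containing the point, and the hypothesis gives both pairs the same sum. Along the orbit of `R` the
second coordinate is `2ⁱy mod 1`, so the integrand is a product of functions of distinct binary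
digits of `y`. These digits are independent for `λ`, which is proved by induction on the length
of the word from `λ = ½ (λ ∘ (y ↦ y/2)⁻¹ + λ ∘ (y ↦ (y+1)/2)⁻¹)`.
-/

section SelfSimilar

open Metric

variable {X : Type*}

lemma infDist_le_mul_infDist_of_mapsTo [PseudoMetricSpace X] {f : X → X} {K : NNReal}
    (hf : LipschitzWith K f) {C : Set X} (hC : MapsTo f C C) (x : X) :
    infDist (f x) C ≤ K * infDist x C := by
  rcases C.eq_empty_or_nonempty with rfl | hne
  · simp
  have : Nonempty C := hne.to_subtype
  rw [infDist_eq_iInf (x := x), Real.mul_iInf_of_nonneg K.coe_nonneg]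
  exact le_ciInf fun y => (infDist_le_dist_of_mem (hC y.2)).trans (hf.dist_le_mul x y)

lemma ae_nonpos_of_measure_lt_le [MeasurableSpace X] {μ : Measure X} [IsFiniteMeasure μ]
    {g : X → ℝ} (hg : Measurable g) {c : ℝ} (hc : 1 < c)
    (h : ∀ t > 0, μ {x | t < g x} ≤ μ {x | c * t < g x}) : ∀ᵐ x ∂μ, g x ≤ 0 := by
  have hnull : ∀ t > 0, μ {x | t < g x} = 0 := by
    intro t ht
    have hle : ∀ n : ℕ, μ {x | t < g x} ≤ μ {x | c ^ n * t < g x} := by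
      intro n
      induction n with
      | zero => simp
      | succ n ih => simpa only [pow_succ', mul_assoc] using ih.trans (h _ (by positivity))
    have hanti : Antitone fun n : ℕ => {x | c ^ n * t < g x} := fun m n hmn x hx =>
      lt_of_le_of_lt (mul_le_mul_of_nonneg_right (pow_le_pow_right₀ hc.le hmn) ht.le) hx
    have hempty : ⋂ n : ℕ, {x | c ^ n * t < g x} = ∅ := by
      refine eq_empty_of_forall_notMem fun x hx => ?_
      obtain ⟨n, hn⟩ := pow_unbounded_of_one_lt (g x / t) hc
      rw [div_lt_iff₀ ht] at hn
      exact lt_asymm hn (mem_iInter.1 hx n)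
    have hlim := tendsto_measure_iInter_atTop
      (fun n => (measurableSet_lt measurable_const hg).nullMeasurableSet) hanti
      ⟨0, measure_ne_top μ _⟩
    rw [hempty, measure_empty] at hlim
    exact nonpos_iff_eq_zero.1 (ge_of_tendsto' hlim hle)
  have hcover : {x | ¬g x ≤ 0} ⊆ ⋃ n : ℕ, {x | 1 / (n + 1) < g x} := fun x hx => by
    obtain ⟨n, hn⟩ := exists_nat_one_div_lt (not_le.1 hx)
    exact mem_iUnion.2 ⟨n, hn⟩
  exact measure_mono_null hcover (measure_iUnion_null fun n => hnull _ (by positivity))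

lemma preimage_setOf_lt_infDist_subset [PseudoMetricSpace X] {f : X → X} {K : NNReal}
    (hK : 0 < K) (hf : LipschitzWith K f) {C : Set X} (hC : MapsTo f C C) (t : ℝ) :
    f ⁻¹' {y | t < infDist y C} ⊆ {x | (K : ℝ)⁻¹ * t < infDist x C} := fun x hx =>
  (inv_mul_lt_iff₀ (NNReal.coe_pos.2 hK)).2
    (lt_of_lt_of_le hx (infDist_le_mul_infDist_of_mapsTo hf hC x))

lemma ae_mem_of_lintegral_eq_half_add [PseudoMetricSpace X] [MeasurableSpace X]
    [OpensMeasurableSpace X] {μ : Measure X} [IsFiniteMeasure μ] {f₀ f₁ : X → X} {K : NNReal}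
    (hK : K < 1) (hf₀ : LipschitzWith K f₀) (hf₁ : LipschitzWith K f₁)
    (hμ : ∀ φ : X → ℝ≥0∞, Measurable φ →
      ∫⁻ x, φ x ∂μ = (1 / 2) * (∫⁻ x, φ (f₀ x) ∂μ + ∫⁻ x, φ (f₁ x) ∂μ))
    {C : Set X} (hC : IsClosed C) (hne : C.Nonempty) (h₀ : MapsTo f₀ C C) (h₁ : MapsTo f₁ C C) :
    ∀ᵐ x ∂μ, x ∈ C := by
  -- enlarging `K` to a positive constant lets us divide by it
  set K' : NNReal := max K 2⁻¹
  have hK'pos : 0 < K' := lt_max_of_lt_right (by norm_num)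
  have hK'lt : (K' : ℝ) < 1 := by exact_mod_cast max_lt hK (by norm_num)
  set S : ℝ → Set X := fun t => {x | t < infDist x C}
  have hS : ∀ t, MeasurableSet (S t) := fun t =>
    measurableSet_lt measurable_const (continuous_infDist_pt C).measurable
  have hscale : ∀ t > 0, μ (S t) ≤ μ (S ((K' : ℝ)⁻¹ * t)) := by
    intro t _
    have hcomp : ∀ f : X → X, LipschitzWith K f → MapsTo f C C →
        ∫⁻ x, (S t).indicator 1 (f x) ∂μ ≤ μ (S ((K' : ℝ)⁻¹ * t)) := fun f hf hfC =>
      (lintegral_indicator_one_le (f ⁻¹' S t)).trans (measure_mono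
        (preimage_setOf_lt_infDist_subset hK'pos (hf.weaken (le_max_left _ _)) hfC t))
    rw [← lintegral_indicator_one (hS t), hμ _ (measurable_one.indicator (hS t))]
    calc 1 / 2 * (∫⁻ x, (S t).indicator 1 (f₀ x) ∂μ + ∫⁻ x, (S t).indicator 1 (f₁ x) ∂μ)
        ≤ 1 / 2 * (μ (S ((K' : ℝ)⁻¹ * t)) + μ (S ((K' : ℝ)⁻¹ * t))) := by
          gcongr
          exacts [hcomp f₀ hf₀ h₀, hcomp f₁ hf₁ h₁]
      _ = μ (S ((K' : ℝ)⁻¹ * t)) := by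
          rw [← two_mul, ← mul_assoc, one_div, ENNReal.inv_mul_cancel two_ne_zero
            ENNReal.ofNat_ne_top, one_mul]
  filter_upwards [ae_nonpos_of_measure_lt_le (continuous_infDist_pt C).measurable
    ((one_lt_inv₀ (NNReal.coe_pos.2 hK'pos)).2 hK'lt) hscale] with x hx
  rw [← hC.closure_eq, mem_closure_iff_infDist_zero hne]
  exact le_antisymm hx infDist_nonneg

end SelfSimilar

lemma integral_Ioo_zero_one_eq_half_add {E : Type*} [NormedAddCommGroup E] [NormedSpace ℝ E]
    {G : ℝ → E} (hG : IntegrableOn G (Ioo 0 1)) :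
    ∫ y in Ioo 0 1, G y =
      (2⁻¹ : ℝ) • ((∫ y in Ioo 0 1, G (y / 2)) + ∫ y in Ioo 0 1, G ((y + 1) / 2)) := by
  have hIoo : ∀ F : ℝ → E, ∫ y in Ioo 0 1, F y = ∫ y in (0 : ℝ)..1, F y := fun F => by
    rw [intervalIntegral.integral_of_le zero_le_one, integral_Ioc_eq_integral_Ioo]
  have hG' : IntegrableOn G (Icc 0 1) := by rwa [integrableOn_Icc_iff_integrableOn_Ioo]
  have hint : ∀ a b : ℝ, a ∈ Icc 0 1 → b ∈ Icc 0 1 → IntervalIntegrable G volume a b :=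
    fun a b ha hb => (hG'.mono_set (uIcc_subset_Icc ha hb)).intervalIntegrable
  simp only [hIoo, add_div _ (1 : ℝ), intervalIntegral.integral_comp_div G two_ne_zero,
    intervalIntegral.integral_comp_div_add G two_ne_zero]
  rw [← intervalIntegral.integral_add_adjacent_intervals (b := 2⁻¹)
    (hint _ _ (by norm_num) (by norm_num)) (hint _ _ (by norm_num) (by norm_num))]
  norm_num
  module

lemma fract_natCast_mul_fract (m : ℕ) (t : ℝ) :
    Int.fract (m * Int.fract t) = Int.fract (m * t) := by
  have h : (m : ℝ) * Int.fract t = m * t - ((m * ⌊t⌋ : ℤ) : ℝ) := by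
    rw [Int.fract]
    push_cast
    ring
  rw [h, Int.fract_sub_intCast]

lemma iterate_fract_natCast_mul (m n : ℕ) (t : ℝ) :
    (fun s : ℝ => Int.fract (m * s))^[n] (Int.fract t) = Int.fract ((m : ℝ) ^ n * t) := by
  induction n with
  | zero => simp
  | succ n ih => rw [Function.iterate_succ_apply', ih, fract_natCast_mul_fract, pow_succ',
      mul_assoc]

lemma Rmap_iterate_fract (n : ℕ) (x y : ℝ) :
    Rmap^[n] (Int.fract x, Int.fract y) = (Int.fract (4 ^ n * x), Int.fract (2 ^ n * y)) := by
  have h : Rmap = Prod.map (fun s : ℝ => Int.fract ((4 : ℕ) * s))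
      (fun s : ℝ => Int.fract ((2 : ℕ) * s)) := by
    ext z <;> simp [Rmap]
  rw [h, Prod.map_iterate, Prod.map_apply, iterate_fract_natCast_mul, iterate_fract_natCast_mul]
  norm_num

section Cantor

lemma div_four_pow_le_of_le_two {d : ℕ} (hd : d ≤ 2) (k : ℕ) :
    (d : ℝ) / 4 ^ (k + 1) ≤ 2⁻¹ * 4⁻¹ ^ k := by
  have : (d : ℝ) ≤ 2 := by exact_mod_cast hd
  rw [div_le_iff₀ (by positivity), pow_succ, inv_pow]
  field_simp
  linarith

lemma summable_geometric_four_inv : Summable fun k : ℕ => (2⁻¹ : ℝ) * 4⁻¹ ^ k :=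
  (summable_geometric_of_lt_one (by norm_num) (by norm_num)).mul_left _

lemma summable_digits_div_four_pow {a : ℕ → ℕ} (ha : ∀ k, a k ≤ 2) :
    Summable fun k => (a k : ℝ) / 4 ^ (k + 1) :=
  .of_nonneg_of_le (fun k => by positivity) (fun k => div_four_pow_le_of_le_two (ha k) k)
    summable_geometric_four_inv

lemma tsum_digits_div_four_pow {a : ℕ → ℕ} (ha : ∀ k, a k ≤ 2) :
    ∑' k, (a k : ℝ) / 4 ^ (k + 1) = (a 0 + ∑' k, (a (k + 1) : ℝ) / 4 ^ (k + 1)) / 4 := by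
  rw [(summable_digits_div_four_pow ha).tsum_eq_zero_add, add_div, ← tsum_div_const]
  congr 1
  · norm_num
  · exact tsum_congr fun k => by rw [pow_succ _ (k + 1), div_div]

lemma digit_le_two {a : ℕ → ℕ} (ha : ∀ k, a k = 0 ∨ a k = 2) (k : ℕ) : a k ≤ 2 := by
  rcases ha k with h | h <;> omega

lemma cantor4_eq_union :
    cantor4 = (fun x => x / 4) '' cantor4 ∪ (fun x => (x + 2) / 4) '' cantor4 := by
  ext x
  constructor
  · rintro ⟨a, ha, rfl⟩
    have htail : ∑' k, (a (k + 1) : ℝ) / 4 ^ (k + 1) ∈ cantor4 := ⟨_, fun k => ha (k + 1), rfl⟩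
    rw [tsum_digits_div_four_pow (digit_le_two ha)]
    rcases ha 0 with h | h
    · exact Or.inl ⟨_, htail, by simp [h]⟩
    · exact Or.inr ⟨_, htail, by simp [h, add_comm]⟩
  · have hcons : ∀ d : ℕ, (d = 0 ∨ d = 2) → ∀ t ∈ cantor4, (d + t) / 4 ∈ cantor4 := by
      rintro d hd _ ⟨b, hb, rfl⟩
      have hc : ∀ k, (if k = 0 then d else b (k - 1)) = 0 ∨ (if k = 0 then d else b (k - 1)) = 2 :=
        fun k => by split_ifs; exacts [hd, hb _]
      refine ⟨_, hc, ?_⟩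
      rw [tsum_digits_div_four_pow (digit_le_two hc)]
      simp
    rintro (⟨t, ht, rfl⟩ | ⟨t, ht, rfl⟩)
    · simpa using hcons 0 (Or.inl rfl) t ht
    · simpa [add_comm] using hcons 2 (Or.inr rfl) t ht

lemma cantor4_subset_Icc : cantor4 ⊆ Icc 0 (2 / 3) := by
  rintro _ ⟨a, ha, rfl⟩
  refine ⟨tsum_nonneg fun k => by positivity, ?_⟩
  calc ∑' k, (a k : ℝ) / 4 ^ (k + 1) ≤ ∑' k : ℕ, 2⁻¹ * 4⁻¹ ^ k :=
        (summable_digits_div_four_pow (digit_le_two ha)).tsum_le_tsum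
          (fun k => div_four_pow_le_of_le_two (digit_le_two ha k) k) summable_geometric_four_inv
    _ = 2 / 3 := by
        rw [tsum_mul_left, tsum_geometric_of_lt_one (by norm_num) (by norm_num)]
        norm_num

lemma isClosed_cantor4 : IsClosed cantor4 := by
  have hcomp : IsCompact (univ.pi fun _ : ℕ => ({0, 2} : Set ℕ)) :=
    isCompact_univ_pi fun _ => (Set.toFinite _).isCompact
  have hcont : ContinuousOn (fun a : ℕ → ℕ => ∑' k, (a k : ℝ) / 4 ^ (k + 1))
      (univ.pi fun _ => {0, 2}) := by
    refine continuousOn_tsum (fun k => ((continuous_of_discreteTopology.comp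
      (continuous_apply k)).div_const _).continuousOn) summable_geometric_four_inv
      fun k a ha => ?_
    rw [Real.norm_of_nonneg (by positivity)]
    have hk : a k = 0 ∨ a k = 2 := ha k trivial
    exact div_four_pow_le_of_le_two (by omega) k
  convert (hcomp.image_of_continuousOn hcont).isClosed using 1
  ext x
  simp [cantor4, eq_comm]

lemma disjoint_cantor4_pieces :
    Disjoint ((fun x : ℝ => x / 4) '' cantor4) ((fun x : ℝ => (x + 2) / 4) '' cantor4) := by
  refine disjoint_left.2 ?_
  rintro _ ⟨t, ht, rfl⟩ ⟨s, hs, hst⟩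
  have := cantor4_subset_Icc ht
  have := cantor4_subset_Icc hs
  simp only [mem_Icc] at *
  linarith

lemma fract_eq_self_of_mem_cantor4 {x : ℝ} (hx : x ∈ cantor4) : Int.fract x = x :=
  Int.fract_eq_self.2 ⟨(cantor4_subset_Icc hx).1, by linarith [(cantor4_subset_Icc hx).2]⟩

lemma mapsTo_fract_four_mul_cantor4 : MapsTo (fun x => Int.fract (4 * x)) cantor4 cantor4 := by
  intro x hx
  rw [cantor4_eq_union] at hx
  rcases hx with ⟨t, ht, rfl⟩ | ⟨t, ht, rfl⟩
  · simpa [mul_div_cancel₀, fract_eq_self_of_mem_cantor4 ht] using ht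
  · have : 4 * ((t + 2) / 4) = t + (2 : ℕ) := by push_cast; ring
    simpa [this, fract_eq_self_of_mem_cantor4 ht] using ht

lemma fract_four_pow_mul_mem_cantor4 {x : ℝ} (hx : x ∈ cantor4) (n : ℕ) :
    Int.fract (4 ^ n * x) ∈ cantor4 := by
  have := iterate_fract_natCast_mul 4 n x
  rw [fract_eq_self_of_mem_cantor4 hx] at this
  norm_num at this
  exact this ▸ mapsTo_fract_four_mul_cantor4.iterate n hx

lemma Rmap_iterate_of_mem_cantor4 {x y : ℝ} (hx : x ∈ cantor4) (hy : y ∈ Ioo 0 1) (n : ℕ) :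
    Rmap^[n] (x, y) = (Int.fract (4 ^ n * x), Int.fract (2 ^ n * y)) := by
  rw [← Rmap_iterate_fract, fract_eq_self_of_mem_cantor4 hx, Int.fract_eq_self.2 ⟨hy.1.le, hy.2⟩]

lemma lipschitzWith_add_div_four (c : ℝ) : LipschitzWith 4⁻¹ fun x : ℝ => (x + c) / 4 :=
  LipschitzWith.of_dist_le_mul fun x y => by
    rw [Real.dist_eq, Real.dist_eq, ← sub_div, add_sub_add_right_eq_sub, abs_div]
    norm_num
    exact le_of_eq (by ring)

lemma ae_mem_cantor4 (μ₄ : Measure ℝ) [IsFiniteMeasure μ₄]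
    (hμ₄ : ∀ φ : ℝ → ℝ≥0∞, Measurable φ →
      ∫⁻ x, φ x ∂μ₄ =
        (1 / 2) * (∫⁻ x, φ (x / 4) ∂μ₄ + ∫⁻ x, φ ((x + 2) / 4) ∂μ₄)) :
    ∀ᵐ x ∂μ₄, x ∈ cantor4 :=
  ae_mem_of_lintegral_eq_half_add (by norm_num) (by simpa using lipschitzWith_add_div_four 0)
    (lipschitzWith_add_div_four 2) hμ₄ isClosed_cantor4
    ⟨0, fun _ => 0, fun _ => Or.inl rfl, by simp⟩
    (fun x hx => by rw [cantor4_eq_union]; exact Or.inl (mem_image_of_mem _ hx))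
    (fun x hx => by rw [cantor4_eq_union]; exact Or.inr (mem_image_of_mem _ hx))

end Cantor

section HalfStep

noncomputable def halfStep (p q : ℂ) : ℝ → ℂ :=
  (Icc 0 2⁻¹).indicator (fun _ => p) + (Icc 2⁻¹ 1).indicator (fun _ => q)

variable (p q : ℂ)

lemma measurable_halfStep : Measurable (halfStep p q) :=
  (measurable_const.indicator measurableSet_Icc).add (measurable_const.indicator measurableSet_Icc)

lemma norm_halfStep_le (y : ℝ) : ‖halfStep p q y‖ ≤ ‖p‖ + ‖q‖ :=
  (norm_add_le _ _).trans (add_le_add (norm_indicator_le_norm_self _ _)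
    (norm_indicator_le_norm_self _ _))

lemma halfStep_div_two {y : ℝ} (hy : y ∈ Ioo 0 1) : halfStep p q (y / 2) = p := by
  have h₀ : y / 2 ∈ Icc 0 2⁻¹ := ⟨by linarith [hy.1], by linarith [hy.2]⟩
  have h₁ : y / 2 ∉ Icc 2⁻¹ 1 := fun h => by linarith [h.1, hy.2]
  simp [halfStep, h₀, h₁]

lemma halfStep_add_one_div_two {y : ℝ} (hy : y ∈ Ioo 0 1) : halfStep p q ((y + 1) / 2) = q := by
  have h₀ : (y + 1) / 2 ∉ Icc 0 2⁻¹ := fun h => by linarith [h.2, hy.1]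
  have h₁ : (y + 1) / 2 ∈ Icc 2⁻¹ 1 := ⟨by linarith [hy.1], by linarith [hy.2]⟩
  simp [halfStep, h₀, h₁]

lemma integral_halfStep : ∫ y in Icc 0 1, halfStep p q y = (p + q) / 2 := by
  rw [integral_Icc_eq_integral_Ioo, integral_Ioo_zero_one_eq_half_add
      (Measure.integrableOn_of_bounded (by simp) (measurable_halfStep p q).aestronglyMeasurable
        (ae_of_all _ (norm_halfStep_le p q))),
    setIntegral_congr_fun measurableSet_Ioo fun y hy => halfStep_div_two p q hy,
    setIntegral_congr_fun measurableSet_Ioo fun y hy => halfStep_add_one_div_two p q hy]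
  simp [Complex.real_smul]
  ring

end HalfStep

lemma Ups_image_cantor4_prod (k : Fin 4) :
    Ups k '' (cantor4 ×ˢ Icc 0 1) =
      ![(fun x => x / 4) '' cantor4, (fun x => (x + 2) / 4) '' cantor4,
          (fun x => x / 4) '' cantor4, (fun x => (x + 2) / 4) '' cantor4] k ×ˢ
        ![Icc 0 2⁻¹, Icc 0 2⁻¹, Icc 2⁻¹ 1, Icc 2⁻¹ 1] k := by
  have hI₀ : (fun y : ℝ => y / 2) '' Icc 0 1 = Icc 0 2⁻¹ := by
    ext y
    constructor
    · rintro ⟨z, ⟨h₀, h₁⟩, rfl⟩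
      constructor <;> linarith
    · rintro ⟨h₀, h₁⟩
      exact ⟨2 * y, ⟨by linarith, by linarith⟩, by ring⟩
  have hI₁ : (fun y : ℝ => (y + 1) / 2) '' Icc 0 1 = Icc 2⁻¹ 1 := by
    ext y
    constructor
    · rintro ⟨z, ⟨h₀, h₁⟩, rfl⟩
      constructor <;> linarith
    · rintro ⟨h₀, h₁⟩
      exact ⟨2 * y - 1, ⟨by linarith, by linarith⟩, by ring⟩
  fin_cases k
  · exact (prodMap_image_prod (fun x : ℝ => x / 4) (fun y : ℝ => y / 2) _ _).trans
      (by rw [hI₀]; rfl)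
  · exact (prodMap_image_prod (fun x : ℝ => (x + 2) / 4) (fun y : ℝ => y / 2) _ _).trans
      (by rw [hI₀]; rfl)
  · exact (prodMap_image_prod (fun x : ℝ => x / 4) (fun y : ℝ => (y + 1) / 2) _ _).trans
      (by rw [hI₁]; rfl)
  · exact (prodMap_image_prod (fun x : ℝ => (x + 2) / 4) (fun y : ℝ => (y + 1) / 2) _ _).trans
      (by rw [hI₁]; rfl)

lemma exists_Hstep_eq_halfStep {a : Fin 4 → Fin 4 → ℂ}
    (ha : ∀ j, a j 0 + a j 2 = a j 1 + a j 3) (j : Fin 4) {x : ℝ} (hx : x ∈ cantor4) :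
    ∃ p q : ℂ, p + q = a j 0 + a j 2 ∧ ∀ y, Hstep a j (x, y) = halfStep p q y := by
  rw [cantor4_eq_union] at hx
  rcases hx with hx | hx
  · refine ⟨a j 0, a j 2, rfl, fun y => ?_⟩
    simp only [Hstep, Fin.sum_univ_four, Ups_image_cantor4_prod]
    simp [halfStep, Set.indicator, hx, disjoint_cantor4_pieces.notMem_of_mem_left hx]
  · refine ⟨a j 1, a j 3, (ha j).symm, fun y => ?_⟩
    simp only [Hstep, Fin.sum_univ_four, Ups_image_cantor4_prod]
    simp [halfStep, Set.indicator, hx, disjoint_cantor4_pieces.notMem_of_mem_right hx]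

lemma integrableOn_prod_halfStep (p q : ℕ → ℂ) (K : ℕ) :
    IntegrableOn (fun y => ∏ i : Fin K, 2 * halfStep (p i) (q i) (Int.fract (2 ^ (i : ℕ) * y)))
      (Ioo 0 1) := by
  refine Measure.integrableOn_of_bounded (M := ∏ i : Fin K, 2 * (‖p i‖ + ‖q i‖)) (by simp) ?_
    (ae_of_all _ fun y => ?_)
  · exact (Finset.measurable_prod _ fun i _ => ((measurable_halfStep _ _).comp
      (measurable_fract.comp (measurable_const_mul _))).const_mul 2).aestronglyMeasurable
  · rw [norm_prod]
    refine Finset.prod_le_prod (fun _ _ => norm_nonneg _) fun i _ => ?_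
    rw [norm_mul, Complex.norm_two]
    gcongr
    exact norm_halfStep_le _ _ _

lemma prod_halfStep_fract_div_two (p q : ℕ → ℂ) (K : ℕ) {y : ℝ} (hy : y ∈ Ioo 0 1) :
    ∏ i : Fin (K + 1), 2 * halfStep (p i) (q i) (Int.fract (2 ^ (i : ℕ) * (y / 2))) =
      2 * p 0 * ∏ i : Fin K,
        2 * halfStep (p (i + 1)) (q (i + 1)) (Int.fract (2 ^ (i : ℕ) * y)) := by
  have hfr : Int.fract (y / 2) = y / 2 :=
    Int.fract_eq_self.2 ⟨by linarith [hy.1], by linarith [hy.2]⟩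
  rw [Fin.prod_univ_succ]
  simp only [Fin.val_zero, Fin.val_succ, pow_zero, one_mul, hfr, halfStep_div_two (p 0) (q 0) hy]
  congr 1
  refine Finset.prod_congr rfl fun i _ => ?_
  rw [pow_succ, mul_assoc, mul_div_cancel₀ _ two_ne_zero]

lemma prod_halfStep_fract_add_one_div_two (p q : ℕ → ℂ) (K : ℕ) {y : ℝ} (hy : y ∈ Ioo 0 1) :
    ∏ i : Fin (K + 1), 2 * halfStep (p i) (q i) (Int.fract (2 ^ (i : ℕ) * ((y + 1) / 2))) =
      2 * q 0 * ∏ i : Fin K,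
        2 * halfStep (p (i + 1)) (q (i + 1)) (Int.fract (2 ^ (i : ℕ) * y)) := by
  have hfr : Int.fract ((y + 1) / 2) = (y + 1) / 2 :=
    Int.fract_eq_self.2 ⟨by linarith [hy.1], by linarith [hy.2]⟩
  rw [Fin.prod_univ_succ]
  simp only [Fin.val_zero, Fin.val_succ, pow_zero, one_mul, hfr,
    halfStep_add_one_div_two (p 0) (q 0) hy]
  congr 1
  refine Finset.prod_congr rfl fun i _ => ?_
  have h : (2 : ℝ) ^ ((i : ℕ) + 1) * ((y + 1) / 2) = 2 ^ (i : ℕ) * y + (2 ^ (i : ℕ) : ℕ) := by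
    push_cast
    ring
  rw [h, Int.fract_add_natCast]

lemma integral_prod_halfStep_fract (p q : ℕ → ℂ) (K : ℕ) :
    ∫ y in Ioo 0 1, ∏ i : Fin K, 2 * halfStep (p i) (q i) (Int.fract (2 ^ (i : ℕ) * y)) =
      ∏ i : Fin K, (p i + q i) := by
  induction K generalizing p q with
  | zero => simp
  | succ K ih =>
    have htail := ih (fun i => p (i + 1)) (fun i => q (i + 1))
    rw [integral_Ioo_zero_one_eq_half_add (integrableOn_prod_halfStep p q _),
      setIntegral_congr_fun measurableSet_Ioo fun y => prod_halfStep_fract_div_two p q K,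
      setIntegral_congr_fun measurableSet_Ioo fun y => prod_halfStep_fract_add_one_div_two p q K,
      integral_const_mul, integral_const_mul, htail, Fin.prod_univ_succ, Complex.real_smul]
    simp only [Fin.val_succ, Fin.val_zero]
    push_cast
    ring

-- `l` lists the word `ω = j_K … j_1` from the left, so `l.getD (l.length - 1 - i) 0` is `j_{i+1}`.
/-- if `a_{j0} + a_{j2} = a_{j1} + a_{j3}` for all `j`, then for every
word `ω = j_K … j_1` (a list with leftmost letter first; the factor for `j_k` involves
`R^{k-1}`), for μ₄-a.e. `x`:
`∫_{[0,1]} ∏_{k=1}^K 2 H_{j_k}(R^{k-1}(x,y)) dλ(y) = ∏_{k=1}^K 2 ∫_{[0,1]} H_{j_k}(4^{k-1}x mod 1, y) dλ(y)`,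
and each factor `2 ∫_{[0,1]} H_{j_k}(4^{k-1}x mod 1, y) dλ(y)` equals `a_{j_k,0} + a_{j_k,2}`. -/
theorem integral_factorization
    (μ₄ : Measure ℝ) [IsProbabilityMeasure μ₄]
    (hμ₄ : ∀ φ : ℝ → ℝ≥0∞, Measurable φ →
      ∫⁻ x, φ x ∂μ₄ =
        (1 / 2) * (∫⁻ x, φ (x / 4) ∂μ₄ + ∫⁻ x, φ ((x + 2) / 4) ∂μ₄))
    (a : Fin 4 → Fin 4 → ℂ) (ha : ∀ j, a j 0 + a j 2 = a j 1 + a j 3)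
    (l : List (Fin 4)) :
    ∀ᵐ x ∂μ₄,
      ((∫ y in Icc (0 : ℝ) 1,
          ∏ i : Fin l.length,
            2 * Hstep a (l.getD (l.length - 1 - (i : ℕ)) 0) (Rmap^[(i : ℕ)] (x, y))) =
        ∏ i : Fin l.length,
          2 * ∫ y in Icc (0 : ℝ) 1,
            Hstep a (l.getD (l.length - 1 - (i : ℕ)) 0)
              (Int.fract (4 ^ (i : ℕ) * x), y)) ∧
      ∀ i : Fin l.length,
        (2 * ∫ y in Icc (0 : ℝ) 1,
            Hstep a (l.getD (l.length - 1 - (i : ℕ)) 0)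
              (Int.fract (4 ^ (i : ℕ) * x), y)) =
          a (l.getD (l.length - 1 - (i : ℕ)) 0) 0 +
            a (l.getD (l.length - 1 - (i : ℕ)) 0) 2 := by
  filter_upwards [ae_mem_cantor4 μ₄ hμ₄] with x hx
  choose p q hpq hH using fun i : ℕ =>
    exists_Hstep_eq_halfStep ha (l.getD (l.length - 1 - i) 0) (fract_four_pow_mul_mem_cantor4 hx i)
  have hfactor : ∀ i : ℕ, 2 * ∫ y in Icc (0 : ℝ) 1,
      Hstep a (l.getD (l.length - 1 - i) 0) (Int.fract (4 ^ i * x), y) = p i + q i := fun i => by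
    simp_rw [hH i, integral_halfStep]
    ring
  refine ⟨?_, fun i => (hfactor i).trans (hpq i)⟩
  rw [integral_Icc_eq_integral_Ioo, setIntegral_congr_fun measurableSet_Ioo fun y hy =>
      Finset.prod_congr rfl fun i _ => by rw [Rmap_iterate_of_mem_cantor4 hx hy, hH],
    integral_prod_halfStep_fract]
  exact Finset.prod_congr rfl fun i _ => (hfactor i).symm
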